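/- Define x(T) := ((1+i)/2)·((1+√3)·T + 2)/(T − 1 − √3). Let U ⊆ ℂ be open with T ≠ 1+√3, T·(T³−1)·(T³+8) ≠ 0 and x(T)⁸ + 14·x(T)⁴ + 1 ≠ 0, x(T) ≠ 0 for all T ∈ U. Let V ⊆ ℂ be open with x(U) ⊆ V, let ψ solve ψ''(x) = 48·(x⁵−x)²/(x⁸+14x⁴+1)²·ψ(x) on V, and let g : ℂ → ℂ be twice differentiable and nonvanishing on U with g(T)² = x'(T) for all T ∈ U. Then Φ(T) := ψ(x(T))/g(T) solves Φ''(T) = −(1/4)·(T⁶−20T³−8)²/(T²(T³+8)²(T³−1)²)·Φ(T) on U. -/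

import Mathlib

open Complex

/-- `f` solves the equation `ψ'' = Q·ψ` on the open set `U`. -/
def SolvesOn (Q f : ℂ → ℂ) (U : Set ℂ) : Prop :=
  (∀ x ∈ U, DifferentiableAt ℂ f x) ∧ (∀ x ∈ U, DifferentiableAt ℂ (deriv f) x) ∧
    ∀ x ∈ U, deriv (deriv f) x = Q x * f x

/-- The Möbius change of Example 7 of the paper. -/
noncomputable def xMoebius (T : ℂ) : ℂ :=
  (1 + Complex.I) / 2 * ((1 + (Real.sqrt 3 : ℂ)) * T + 2) / (T - 1 - (Real.sqrt 3 : ℂ))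

/-! If `x' = g²`, then `Φ = ψ ∘ x / g` satisfies `Φ'' = (Q(x)·x'² − S(x)/2)·Φ` whenever
`ψ'' = Q·ψ`, where `S` is the Schwarzian derivative (Liouville's transformation). A Möbius map has
vanishing Schwarzian, so only `Q(x)·x'²` survives. For the given map `x⁴ = −m⁴/4` with `m` a Möbius
map with coefficients in `ℚ(√3)`, which turns `x⁵ − x` and `x⁸ + 14x⁴ + 1` into constant multiples
of `T⁶ − 20T³ − 8` and `T(T³ − 1)(T³ + 8)` divided by powers of `T − 1 − √3`. -/

open Set

theorem SolvesOn.congr_coeff {Q Q' f : ℂ → ℂ} {U : Set ℂ} (h : SolvesOn Q f U)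
    (hQ : EqOn Q Q' U) : SolvesOn Q' f U :=
  ⟨h.1, h.2.1, fun x hx => by rw [h.2.2 x hx, hQ hx]⟩

noncomputable def schwarzian (f : ℂ → ℂ) (z : ℂ) : ℂ :=
  deriv (deriv (deriv f)) z / deriv f z - 3 / 2 * (deriv (deriv f) z / deriv f z) ^ 2

section Moebius

variable (a b c d : ℂ)

theorem hasDerivAt_div_linear_pow (k : ℂ) (n : ℕ) {z : ℂ} (hz : c * z + d ≠ 0) :
    HasDerivAt (fun z => k / (c * z + d) ^ n) (-(n * c * k) / (c * z + d) ^ (n + 1)) z := by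
  have hlin : HasDerivAt (fun z => c * z + d) c z := by
    simpa using ((hasDerivAt_id z).const_mul c).add_const d
  cases n with
  | zero => simpa using hasDerivAt_const z k
  | succ m =>
    refine ((hasDerivAt_const z k).div (hlin.fun_pow (m + 1)) (pow_ne_zero _ hz)).congr_deriv ?_
    field_simp
    push_cast
    ring

theorem hasDerivAt_moebius {z : ℂ} (hz : c * z + d ≠ 0) :
    HasDerivAt (fun z => (a * z + b) / (c * z + d)) ((a * d - b * c) / (c * z + d) ^ 2) z := by
  have hlin : ∀ p q : ℂ, HasDerivAt (fun z => p * z + q) p z := fun p q => by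
    simpa using ((hasDerivAt_id z).const_mul p).add_const q
  refine ((hlin a b).div (hlin c d) hz).congr_deriv ?_
  ring

theorem schwarzian_moebius {z : ℂ} (hz : c * z + d ≠ 0) :
    schwarzian (fun z => (a * z + b) / (c * z + d)) z = 0 := by
  set Δ := a * d - b * c
  have hW : IsOpen {z : ℂ | c * z + d ≠ 0} := isOpen_ne_fun (by fun_prop) continuous_const
  have h₁ : EqOn (deriv fun z => (a * z + b) / (c * z + d)) (fun z => Δ / (c * z + d) ^ 2)
      {z | c * z + d ≠ 0} := fun y hy => (hasDerivAt_moebius a b c d hy).deriv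
  have h₂ : EqOn (deriv (deriv fun z => (a * z + b) / (c * z + d)))
      (fun z => -((2 : ℕ) * c * Δ) / (c * z + d) ^ 3) {z | c * z + d ≠ 0} := fun y hy =>
    (h₁.deriv hW hy).trans (hasDerivAt_div_linear_pow c d Δ 2 hy).deriv
  have h₃ := (h₂.deriv hW hz).trans (hasDerivAt_div_linear_pow c d _ 3 hz).deriv
  unfold schwarzian
  rw [h₃, h₂ hz, h₁ hz]
  by_cases hΔ : Δ = 0
  · simp [hΔ]
  · field_simp
    push_cast
    ring

end Moebius

theorem schwarzian_eq_of_hasDerivAt_sq {x g : ℂ → ℂ} {U : Set ℂ} (hU : IsOpen U)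
    (hx : ∀ T ∈ U, HasDerivAt x (g T ^ 2) T) (hg : ∀ T ∈ U, DifferentiableAt ℂ g T)
    (hg' : ∀ T ∈ U, DifferentiableAt ℂ (deriv g) T) (hg0 : ∀ T ∈ U, g T ≠ 0) {T : ℂ}
    (hT : T ∈ U) :
    schwarzian x T = 2 * (g T * deriv (deriv g) T - 2 * deriv g T ^ 2) / g T ^ 2 := by
  have h₁ : EqOn (deriv x) (fun T => g T ^ 2) U := fun y hy => (hx y hy).deriv
  have h₂ : EqOn (deriv (deriv x)) (fun T => 2 * g T * deriv g T) U := fun y hy =>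
    (h₁.deriv hU hy).trans <| ((hg y hy).hasDerivAt.pow 2).deriv.trans (by push_cast; ring)
  have h₃ : deriv (deriv (deriv x)) T = 2 * (deriv g T ^ 2 + g T * deriv (deriv g) T) :=
    (h₂.deriv hU hT).trans <|
      (((hg T hT).hasDerivAt.const_mul 2).mul (hg' T hT).hasDerivAt).deriv.trans (by ring)
  have := hg0 T hT
  unfold schwarzian
  rw [h₃, h₂ hT, h₁ hT]
  field_simp
  ring

theorem SolvesOn.comp_div_of_hasDerivAt_sq {Q ψ x g : ℂ → ℂ} {U V : Set ℂ} (hψ : SolvesOn Q ψ V)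
    (hU : IsOpen U) (hxV : MapsTo x U V) (hx : ∀ T ∈ U, HasDerivAt x (g T ^ 2) T)
    (hg : ∀ T ∈ U, DifferentiableAt ℂ g T) (hg' : ∀ T ∈ U, DifferentiableAt ℂ (deriv g) T)
    (hg0 : ∀ T ∈ U, g T ≠ 0) :
    SolvesOn (fun T => Q (x T) * deriv x T ^ 2 - schwarzian x T / 2)
      (fun T => ψ (x T) / g T) U := by
  obtain ⟨hψ₁, hψ₂, hψQ⟩ := hψ
  set Φ₁ : ℂ → ℂ := fun T => deriv ψ (x T) * g T - ψ (x T) * deriv g T / g T ^ 2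
  have hΦ : ∀ T ∈ U, HasDerivAt (fun T => ψ (x T) / g T) (Φ₁ T) T := fun T hT => by
    have := hg0 T hT
    refine (((hψ₁ _ (hxV hT)).hasDerivAt.comp T (hx T hT)).div (hg T hT).hasDerivAt
      this).congr_deriv ?_
    simp only [Φ₁, Function.comp_apply]
    field_simp
  have hΦ₁ : ∀ T ∈ U, HasDerivAt Φ₁ ((Q (x T) * g T ^ 4
      - (g T * deriv (deriv g) T - 2 * deriv g T ^ 2) / g T ^ 2) * (ψ (x T) / g T)) T := by
    intro T hT
    have := hg0 T hT
    have hψ'x := (hψ₂ _ (hxV hT)).hasDerivAt.comp T (hx T hT)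
    rw [hψQ _ (hxV hT)] at hψ'x
    have hψx := (hψ₁ _ (hxV hT)).hasDerivAt.comp T (hx T hT)
    refine ((hψ'x.mul (hg T hT).hasDerivAt).sub ((hψx.mul (hg' T hT).hasDerivAt).div
      ((hg T hT).hasDerivAt.fun_pow 2) (pow_ne_zero 2 this))).congr_deriv ?_
    simp only [Function.comp_apply, Pi.mul_apply]
    field_simp
    ring
  have hderiv : EqOn (deriv fun T => ψ (x T) / g T) Φ₁ U := fun T hT => (hΦ T hT).deriv
  refine ⟨fun T hT => (hΦ T hT).differentiableAt, fun T hT => ?_, fun T hT => ?_⟩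
  · exact (hΦ₁ T hT).differentiableAt.congr_of_eventuallyEq
      (Filter.eventuallyEq_of_mem (hU.mem_nhds hT) hderiv)
  · have := hg0 T hT
    beta_reduce
    rw [hderiv.deriv hU hT, (hΦ₁ T hT).deriv, schwarzian_eq_of_hasDerivAt_sq hU hx hg hg' hg0 hT,
      (hx T hT).deriv]
    field_simp

theorem sqrt_three_sq : (√3 : ℂ) ^ 2 = 3 := by
  norm_cast
  simp

theorem xMoebius_eq_moebius :
    xMoebius = fun T => ((1 + I) / 2 * (1 + √3) * T + (1 + I)) / (1 * T + (-1 - √3)) := by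
  funext T
  unfold xMoebius
  ring

theorem hasDerivAt_xMoebius {T : ℂ} (hT : T ≠ 1 + √3) :
    HasDerivAt xMoebius (-(1 + I) * (3 + √3) / (T - 1 - √3) ^ 2) T := by
  rw [xMoebius_eq_moebius]
  convert hasDerivAt_moebius _ _ 1 (-1 - √3) (z := T) (by grind) using 1
  grind [sqrt_three_sq]

theorem schwarzian_xMoebius {T : ℂ} (hT : T ≠ 1 + √3) : schwarzian xMoebius T = 0 := by
  rw [xMoebius_eq_moebius]
  exact schwarzian_moebius _ _ _ _ (by grind)

theorem xMoebius_pow_four (T : ℂ) :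
    xMoebius T ^ 4 = -(((1 + √3) * T + 2) / (T - 1 - √3)) ^ 4 / 4 := by
  have hI : ((1 + I) / 2) ^ 4 = -1 / 4 := by grind [I_sq]
  unfold xMoebius
  rw [mul_div_assoc, mul_pow, hI]
  ring

theorem xMoebius_pow_five_sub {T : ℂ} (hT : T ≠ 1 + √3) :
    xMoebius T ^ 5 - xMoebius T =
      -2 * (1 + I) * (3 * √3 + 5) * (T ^ 6 - 20 * T ^ 3 - 8) / (T - 1 - √3) ^ 6 := by
  have hD : T - 1 - √3 ≠ 0 := by grind
  rw [show xMoebius T ^ 5 - xMoebius T = xMoebius T * (xMoebius T ^ 4 - 1) by ring,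
    xMoebius_pow_four]
  unfold xMoebius
  field_simp
  grind [sqrt_three_sq]

theorem xMoebius_pow_eight_add {T : ℂ} (hT : T ≠ 1 + √3) :
    xMoebius T ^ 8 + 14 * xMoebius T ^ 4 + 1 =
      192 * (4 * √3 + 7) * (T * (T ^ 3 - 1) * (T ^ 3 + 8)) / (T - 1 - √3) ^ 8 := by
  have hD : T - 1 - √3 ≠ 0 := by grind
  rw [show xMoebius T ^ 8 = (xMoebius T ^ 4) ^ 2 by ring, xMoebius_pow_four]
  field_simp
  grind [sqrt_three_sq]

theorem hyperelliptic_coeff_const :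
    48 * (2 * (1 + I) * (3 * √3 + 5)) ^ 2 * ((1 + I) * (3 + √3)) ^ 2 =
      -(1 / 4) * (192 * (4 * √3 + 7)) ^ 2 := by
  grind [sqrt_three_sq, I_sq]

theorem hyperelliptic_coeff_xMoebius_mul_deriv_sq {T : ℂ} (hT : T ≠ 1 + √3)
    (hT' : T * (T ^ 3 - 1) * (T ^ 3 + 8) ≠ 0) :
    48 * (xMoebius T ^ 5 - xMoebius T) ^ 2 / (xMoebius T ^ 8 + 14 * xMoebius T ^ 4 + 1) ^ 2
        * deriv xMoebius T ^ 2
      = -(1 / 4) * (T ^ 6 - 20 * T ^ 3 - 8) ^ 2 / (T ^ 2 * (T ^ 3 + 8) ^ 2 * (T ^ 3 - 1) ^ 2) := by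
  have hD : T - 1 - √3 ≠ 0 := by grind
  have h47 : (√3 * 4 + 7 : ℂ) ≠ 0 := by
    norm_cast
    positivity
  obtain ⟨⟨hT0, hT1⟩, hT8⟩ : (T ≠ 0 ∧ T ^ 3 - 1 ≠ 0) ∧ T ^ 3 + 8 ≠ 0 := by
    simpa only [mul_ne_zero_iff] using hT'
  rw [xMoebius_pow_five_sub hT, xMoebius_pow_eight_add hT, (hasDerivAt_xMoebius hT).deriv]
  field_simp
  linear_combination 4 * (T ^ 3 * (T ^ 3 - 20) - 8) ^ 2 * hyperelliptic_coeff_const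

theorem schwarz_hyperelliptic_equivalence_general
    (U V : Set ℂ) (hU : IsOpen U)
    (hT1 : ∀ T ∈ U, T ≠ 1 + (Real.sqrt 3 : ℂ))
    (hT2 : ∀ T ∈ U, T * (T ^ 3 - 1) * (T ^ 3 + 8) ≠ 0)
    (hxV : ∀ T ∈ U, xMoebius T ∈ V)
    (ψ g : ℂ → ℂ)
    (hψ : SolvesOn (fun x => 48 * (x ^ 5 - x) ^ 2 / (x ^ 8 + 14 * x ^ 4 + 1) ^ 2) ψ V)
    (hg1 : ∀ T ∈ U, DifferentiableAt ℂ g T)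
    (hg2 : ∀ T ∈ U, DifferentiableAt ℂ (deriv g) T)
    (hgne : ∀ T ∈ U, g T ≠ 0)
    (hgsq : ∀ T ∈ U, g T ^ 2 = deriv xMoebius T) :
    SolvesOn (fun T => -(1 / 4) * (T ^ 6 - 20 * T ^ 3 - 8) ^ 2
        / (T ^ 2 * (T ^ 3 + 8) ^ 2 * (T ^ 3 - 1) ^ 2))
      (fun T => ψ (xMoebius T) / g T) U := by
  have hx : ∀ T ∈ U, HasDerivAt xMoebius (g T ^ 2) T := fun T hT => by
    rw [hgsq T hT]
    exact (hasDerivAt_xMoebius (hT1 T hT)).differentiableAt.hasDerivAt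
  refine (hψ.comp_div_of_hasDerivAt_sq hU hxV hx hg1 hg2 hgne).congr_coeff fun T hT => ?_
  simp only [schwarzian_xMoebius (hT1 T hT), zero_div, sub_zero]
  exact hyperelliptic_coeff_xMoebius_mul_deriv_sq (hT1 T hT) (hT2 T hT)

theorem schwarz_hyperelliptic_equivalence
    (U V : Set ℂ) (hU : IsOpen U) (hV : IsOpen V)
    (hT1 : ∀ T ∈ U, T ≠ 1 + (Real.sqrt 3 : ℂ))
    (hT2 : ∀ T ∈ U, T * (T ^ 3 - 1) * (T ^ 3 + 8) ≠ 0)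
    (hx1 : ∀ T ∈ U, xMoebius T ^ 8 + 14 * xMoebius T ^ 4 + 1 ≠ 0)
    (hx0 : ∀ T ∈ U, xMoebius T ≠ 0)
    (hxV : ∀ T ∈ U, xMoebius T ∈ V)
    (ψ g : ℂ → ℂ)
    (hψ : SolvesOn (fun x => 48 * (x ^ 5 - x) ^ 2 / (x ^ 8 + 14 * x ^ 4 + 1) ^ 2) ψ V)
    (hg1 : ∀ T ∈ U, DifferentiableAt ℂ g T)
    (hg2 : ∀ T ∈ U, DifferentiableAt ℂ (deriv g) T)
    (hgne : ∀ T ∈ U, g T ≠ 0)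
    (hgsq : ∀ T ∈ U, g T ^ 2 = deriv xMoebius T) :
    SolvesOn (fun T => -(1 / 4) * (T ^ 6 - 20 * T ^ 3 - 8) ^ 2
        / (T ^ 2 * (T ^ 3 + 8) ^ 2 * (T ^ 3 - 1) ^ 2))
      (fun T => ψ (xMoebius T) / g T) U :=
  schwarz_hyperelliptic_equivalence_general U V hU hT1 hT2 hxV ψ g hψ hg1 hg2 hgne hgsq
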